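/- arXiv:1907.03753 — 2 statements merged into one kernel-verified Lean document; each statement's English description precedes it below -/
import Mathlib

section
/- Conditional form of Bayes' rule, zero numerator: if $E(X\cdot C|D) = 0$ and there is a positive real number $p$ with $pD \lesssim C\cdot D$, then $E(X|C\cdot D) = 0$. -/
/-- A plausible preorder on a unital associative commutative real algebra. -/
structure PlausiblePreorder (T : Type*) [CommRing T] [Algebra ℝ T] where
  le : T → T → Prop
  plausible : ∀ A : T, A * A = A → le 0 A
  additive : ∀ X Y : T, le 0 X → le 0 Y → le 0 (X + Y)
  smul_nonneg : ∀ (q : ℝ) (X : T), 0 ≤ q → le 0 X → le 0 (q • X)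
  extension : ∀ X Y : T, le X Y ↔ le 0 (Y - X)

variable {T : Type*} [CommRing T] [Algebra ℝ T]

/-- The strict part of a plausible preorder. -/
def PlausiblePreorder.lt (P : PlausiblePreorder T) (X Y : T) : Prop :=
  P.le X Y ∧ ¬ P.le Y X

/-- The equivalence part of a plausible preorder. -/
def PlausiblePreorder.equiv (P : PlausiblePreorder T) (X Y : T) : Prop :=
  P.le X Y ∧ P.le Y X

/-- The conditional expectation of `X` given event `C` is the real number `x`. -/
def CondExpReal (P : PlausiblePreorder T) (X C : T) (x : ℝ) : Prop :=
  ∀ ε : ℝ, 0 < ε →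
    P.lt ((-ε) • C) (X * C - x • C) ∧ P.lt (X * C - x • C) (ε • C)

/-- The conditional expectation of `X` given event `C` is `+∞`. -/
def CondExpTop (P : PlausiblePreorder T) (X C : T) : Prop :=
  ∀ y : ℝ, P.lt (y • C) (X * C)

/-- The conditional expectation of `X` given event `C` is `-∞`. -/
def CondExpBot (P : PlausiblePreorder T) (X C : T) : Prop :=
  ∀ y : ℝ, P.lt (X * C) (y • C)

namespace PlausiblePreorder

variable (P : PlausiblePreorder T) {A B C : T}

lemma le_trans (hAB : P.le A B) (hBC : P.le B C) : P.le A C := by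
  rw [P.extension] at hAB hBC ⊢
  simpa only [sub_add_sub_cancel'] using P.additive _ _ hAB hBC

lemma lt_of_lt_of_le (hAB : P.lt A B) (hBC : P.le B C) : P.lt A C :=
  ⟨P.le_trans hAB.1 hBC, fun hCA => hAB.2 (P.le_trans hBC hCA)⟩

lemma lt_of_le_of_lt (hAB : P.le A B) (hBC : P.lt B C) : P.lt A C :=
  ⟨P.le_trans hAB hBC.1, fun hCA => hBC.2 (P.le_trans hCA hAB)⟩

lemma smul_le_smul {c : ℝ} (hc : 0 ≤ c) (hAB : P.le A B) : P.le (c • A) (c • B) := by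
  rw [P.extension] at hAB ⊢
  simpa only [smul_sub] using P.smul_nonneg c _ hc hAB

lemma neg_le_neg (hAB : P.le A B) : P.le (-B) (-A) := by
  rw [P.extension] at hAB ⊢
  rwa [neg_sub_neg]

end PlausiblePreorder

lemma condExpReal_zero_iff (P : PlausiblePreorder T) (X C : T) :
    CondExpReal P X C 0 ↔
      ∀ ε : ℝ, 0 < ε → P.lt ((-ε) • C) (X * C) ∧ P.lt (X * C) (ε • C) := by
  simp only [CondExpReal, zero_smul, sub_zero]

/-- Since `B` dominates a positive multiple `p • A`, an `ε`-bound relative to `B` follows from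
the `ε p`-bound relative to `A`. -/
lemma condExpReal_zero_of_smul_le (P : PlausiblePreorder T) {Y Z A B : T} {p : ℝ}
    (hp : 0 < p) (hAB : P.le (p • A) B) (hY : CondExpReal P Y A 0) (hYZ : Y * A = Z * B) :
    CondExpReal P Z B 0 := by
  rw [condExpReal_zero_iff] at hY ⊢
  intro ε hε
  obtain ⟨hlower, hupper⟩ := hY (ε * p) (mul_pos hε hp)
  rw [hYZ] at hlower hupper
  have hscaled : P.le ((ε * p) • A) (ε • B) := by
    simpa only [smul_smul] using P.smul_le_smul hε.le hAB
  have hscaled_neg : P.le ((-ε) • B) ((-(ε * p)) • A) := by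
    simpa only [neg_smul] using P.neg_le_neg hscaled
  exact ⟨P.lt_of_le_of_lt hscaled_neg hlower, P.lt_of_lt_of_le hupper hscaled⟩

theorem bayes_conditional_form_zero_general (P : PlausiblePreorder T) (X C D : T)
    (hx : CondExpReal P (X * C) D 0)
    (hp : ∃ p : ℝ, 0 < p ∧ P.le (p • D) (C * D)) :
    CondExpReal P X (C * D) 0 := by
  obtain ⟨p, hp_pos, hpD⟩ := hp
  exact condExpReal_zero_of_smul_le P hp_pos hpD hx (mul_assoc X C D)

theorem bayes_conditional_form_zero (P : PlausiblePreorder T) (X C D : T)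
    (hC : C * C = C) (hD : D * D = D)
    (hx : CondExpReal P (X * C) D 0)
    (hp : ∃ p : ℝ, 0 < p ∧ P.le (p • D) (C * D)) :
    CondExpReal P X (C * D) 0 :=
  bayes_conditional_form_zero_general P X C D hx hp
end

section
/- P form of Bayes' rule with infinite conditional expectation: if $E(X|C\cdot D) \in \{-\infty,+\infty\}$ and there is a real $p$ such that $-pD \lesssim X\cdot C\cdot D \lesssim pD$, then $P(C|D) = 0$. -/
variable {T : Type*} [CommRing T] [Algebra ℝ T]

/-! In either infinite case the bound on `X * C * D` gives `y • (C * D) ⋖ p • D` for every real `y`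
(for `E = -∞` after negating). Dividing by a large `y = t` squeezes `C * D ≲ ε • D`, and strictness
at `y = t` rules out `ε • D ≲ C * D`; the lower half follows since `0 ≲ C * D`. -/

namespace PlausiblePreorder

variable (P : PlausiblePreorder T) {X Y Z : T}

theorem le_trans_s17 (hXY : P.le X Y) (hYZ : P.le Y Z) : P.le X Z := by
  rw [P.extension] at hXY hYZ ⊢
  simpa using P.additive _ _ hXY hYZ

theorem lt_of_lt_of_le_s17 (hXY : P.lt X Y) (hYZ : P.le Y Z) : P.lt X Z :=
  ⟨P.le_trans_s17 hXY.1 hYZ, fun hZX => hXY.2 (P.le_trans_s17 hYZ hZX)⟩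

theorem lt_of_le_of_lt_s17 (hXY : P.le X Y) (hYZ : P.lt Y Z) : P.lt X Z :=
  ⟨P.le_trans_s17 hXY hYZ.1, fun hZX => hYZ.2 (P.le_trans_s17 hZX hXY)⟩

theorem neg_le_neg_iff : P.le (-Y) (-X) ↔ P.le X Y := by
  rw [P.extension (-Y), P.extension X, neg_sub_neg]

theorem neg_lt_neg_iff : P.lt (-Y) (-X) ↔ P.lt X Y := by
  simp only [PlausiblePreorder.lt, neg_le_neg_iff]

theorem smul_le_smul_of_nonneg_left {q : ℝ} (hXY : P.le X Y) (hq : 0 ≤ q) :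
    P.le (q • X) (q • Y) := by
  rw [P.extension] at hXY
  rw [P.extension, ← smul_sub]
  exact P.smul_nonneg q _ hq hXY

theorem smul_le_smul_of_nonneg_right {q r : ℝ} (hqr : q ≤ r) (hX : P.le 0 X) :
    P.le (q • X) (r • X) := by
  rw [P.extension, ← sub_smul]
  exact P.smul_nonneg _ X (sub_nonneg.mpr hqr) hX

theorem le_of_smul_le_smul_left {t : ℝ} (h : P.le (t • X) (t • Y)) (ht : 0 < t) :
    P.le X Y := by
  simpa [inv_smul_smul₀ ht.ne'] using P.smul_le_smul_of_nonneg_left h (inv_nonneg.mpr ht.le)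

end PlausiblePreorder

open PlausiblePreorder

theorem condExpReal_zero_of_forall_smul_lt (P : PlausiblePreorder T) {C D : T}
    (hC : C * C = C) (hD : D * D = D) {p : ℝ} (h : ∀ y : ℝ, P.lt (y • (C * D)) (p • D)) :
    CondExpReal P C D 0 := by
  intro ε hε
  rw [zero_smul, sub_zero]
  have hD0 : P.le 0 D := P.plausible D hD
  have hCD0 : P.le 0 (C * D) := P.plausible _ (by rw [mul_mul_mul_comm, hC, hD])
  obtain ⟨t, ht, hpt⟩ : ∃ t : ℝ, 0 < t ∧ p ≤ t * ε := by
    refine ⟨|p| / ε + 1, by positivity, ?_⟩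
    rw [add_mul, div_mul_cancel₀ _ hε.ne']
    linarith [le_abs_self p]
  have hpD : P.le (p • D) (t • ε • D) := by
    rw [← mul_smul]
    exact P.smul_le_smul_of_nonneg_right hpt hD0
  have hnegD : P.le ((-ε) • D) 0 := by
    simpa using P.smul_le_smul_of_nonneg_right (neg_nonpos.mpr hε.le) hD0
  have hnegCD : P.le (-(C * D)) 0 := by
    simpa using (P.neg_le_neg_iff).mpr hCD0
  have not_le : ¬ P.le (ε • D) (C * D) := fun hle =>
    (h t).2 (P.le_trans_s17 hpD (P.smul_le_smul_of_nonneg_left hle ht.le))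
  refine ⟨⟨P.le_trans_s17 hnegD hCD0, fun hle => not_le ?_⟩, ⟨?_, not_le⟩⟩
  · have hεD : P.le (ε • D) (-(C * D)) := by simpa using (P.neg_le_neg_iff).mpr hle
    exact P.le_trans_s17 hεD (P.le_trans_s17 hnegCD hCD0)
  · exact P.le_of_smul_le_smul_left (P.le_trans_s17 (h t).1 hpD) ht

theorem bayes_P_form_infinite (P : PlausiblePreorder T) (X C D : T)
    (hC : C * C = C) (hD : D * D = D)
    (hinf : CondExpTop P X (C * D) ∨ CondExpBot P X (C * D))
    (hp : ∃ p : ℝ, P.le ((-p) • D) (X * C * D) ∧ P.le (X * C * D) (p • D)) :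
    CondExpReal P C D 0 := by
  obtain ⟨p, hlow, hup⟩ := hp
  rw [mul_assoc] at hlow hup
  refine condExpReal_zero_of_forall_smul_lt P hC hD (p := p) fun y => ?_
  rcases hinf with htop | hbot
  · exact P.lt_of_lt_of_le_s17 (htop y) hup
  · rw [← P.neg_lt_neg_iff, ← neg_smul, ← neg_smul]
    exact P.lt_of_le_of_lt_s17 hlow (hbot (-y))
end
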